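/- arXiv:2303.05410 — 3 statements merged into one kernel-verified Lean document; each statement's English description precedes it below -/
import Mathlib

section
/- Let f: R^n -> R be differentiable with L-Lipschitz gradient, h: R^n -> R_bar proper, and let t in (0, 1/L]. If x^+ is any point satisfying <grad f(x), x^+ - x> + (1/(2t))||x^+ - x||^2 + h(x^+) <= h(x), then f(x^+) + h(x^+) <= f(x) + h(x) - (1/(2t) - L/2) ||x^+ - x||^2. -/
/-!
With `d = y - x`, the function `τ ↦ f (x + τ • d) - τ ⟪∇f x, d⟫ - (L/2) τ² ‖d‖²` has derivative
`⟪∇f (x + τ • d) - ∇f x, d⟫ - L τ ‖d‖² ≤ 0` for `τ ≥ 0`, so comparing its values at `0` and `1`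
gives the descent lemma `f y ≤ f x + ⟪∇f x, y - x⟫ + (L/2) ‖y - x‖²`. Adding the step inequality
to the descent lemma at `y = x⁺` gives the sufficient decrease; only real numbers are ever added
to the extended real values of `h`, so no `⊤ - ⊤` cases arise.
-/

open scoped RealInnerProductSpace

section DescentLemma

variable {E : Type*} [NormedAddCommGroup E] [InnerProductSpace ℝ E] [CompleteSpace E]
  {f : E → ℝ}

theorem Differentiable.hasDerivAt_comp_add_smul (hf : Differentiable ℝ f) (x d : E) (τ : ℝ) :
    HasDerivAt (fun s : ℝ => f (x + s • d)) ⟪gradient f (x + τ • d), d⟫ τ := by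
  have hline : HasDerivAt (fun s : ℝ => x + s • d) d τ := by
    simpa using ((hasDerivAt_id τ).smul_const d).const_add x
  exact (hf _).hasGradientAt.hasFDerivAt.comp_hasDerivAt τ hline

theorem inner_gradient_add_smul_sub_le {L : ℝ}
    (hlip : ∀ a b, ‖gradient f a - gradient f b‖ ≤ L * ‖a - b‖)
    (x d : E) {τ : ℝ} (hτ : 0 ≤ τ) :
    ⟪gradient f (x + τ • d) - gradient f x, d⟫ ≤ L * τ * ‖d‖ ^ 2 :=
  calc ⟪gradient f (x + τ • d) - gradient f x, d⟫
      ≤ ‖gradient f (x + τ • d) - gradient f x‖ * ‖d‖ := real_inner_le_norm _ _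
    _ ≤ L * ‖τ • d‖ * ‖d‖ := by
        gcongr
        simpa using hlip (x + τ • d) x
    _ = L * τ * ‖d‖ ^ 2 := by rw [norm_smul, Real.norm_of_nonneg hτ]; ring

theorem descent_lemma {L : ℝ} (hf : Differentiable ℝ f)
    (hlip : ∀ a b, ‖gradient f a - gradient f b‖ ≤ L * ‖a - b‖) (x y : E) :
    f y ≤ f x + ⟪gradient f x, y - x⟫ + L / 2 * ‖y - x‖ ^ 2 := by
  set d := y - x
  let g : ℝ → ℝ := fun τ => f (x + τ • d) - τ * ⟪gradient f x, d⟫ - L / 2 * τ ^ 2 * ‖d‖ ^ 2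
  have hg : ∀ τ,
      HasDerivAt g (⟪gradient f (x + τ • d) - gradient f x, d⟫ - L * τ * ‖d‖ ^ 2) τ := by
    intro τ
    refine (((hf.hasDerivAt_comp_add_smul x d τ).sub
      ((hasDerivAt_id τ).mul_const ⟪gradient f x, d⟫)).sub
      (((hasDerivAt_pow 2 τ).const_mul (L / 2)).mul_const (‖d‖ ^ 2))).congr_deriv ?_
    simp only [inner_sub_left, Nat.cast_ofNat]
    ring
  have hanti : AntitoneOn g (Set.Ici 0) := by
    refine antitoneOn_of_hasDerivWithinAt_nonpos (convex_Ici 0)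
      (fun τ _ => (hg τ).continuousAt.continuousWithinAt) (fun τ _ => (hg τ).hasDerivWithinAt) ?_
    intro τ hτ
    rw [interior_Ici] at hτ
    linarith [inner_gradient_add_smul_sub_le hlip x d hτ.le]
  have h01 : g 1 ≤ g 0 := hanti (by simp) (by simp) zero_le_one
  simp only [g, one_smul, zero_smul, add_zero, d, add_sub_cancel] at h01
  linarith

end DescentLemma

theorem prox_grad_sufficient_decrease_general {n : ℕ}
    (f : EuclideanSpace ℝ (Fin n) → ℝ) (h : EuclideanSpace ℝ (Fin n) → EReal)
    (L t : ℝ)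
    (hf : Differentiable ℝ f)
    (hlip : ∀ a b, ‖gradient f a - gradient f b‖ ≤ L * ‖a - b‖)
    (x xp : EuclideanSpace ℝ (Fin n))
    (hstep : ((⟪gradient f x, xp - x⟫ + 1 / (2 * t) * ‖xp - x‖ ^ 2 : ℝ) : EReal) + h xp ≤ h x) :
    (f xp : EReal) + h xp ≤
      (f x : EReal) + h x - ((1 / (2 * t) - L / 2) * ‖xp - x‖ ^ 2 : ℝ) := by
  set c := ⟪gradient f x, xp - x⟫ + 1 / (2 * t) * ‖xp - x‖ ^ 2
  set q := (1 / (2 * t) - L / 2) * ‖xp - x‖ ^ 2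
  have hdesc : f xp ≤ f x - q + c := by
    have := descent_lemma hf hlip x xp
    simp only [c, q]
    linarith
  calc (f xp : EReal) + h xp ≤ ((f x - q + c : ℝ) : EReal) + h xp := by gcongr
    _ = ((f x - q : ℝ) : EReal) + ((c : EReal) + h xp) := by rw [EReal.coe_add, add_assoc]
    _ ≤ ((f x - q : ℝ) : EReal) + h x := by gcongr
    _ = (f x : EReal) + h x - q := by
        rw [sub_eq_add_neg, EReal.coe_add, sub_eq_add_neg, EReal.coe_neg, add_right_comm]

/-- Sufficient decrease of the proximal gradient step. -/
theorem prox_grad_sufficient_decrease {n : ℕ}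
    (f : EuclideanSpace ℝ (Fin n) → ℝ) (h : EuclideanSpace ℝ (Fin n) → EReal)
    (L t : ℝ) (hL : 0 < L)
    (hf : Differentiable ℝ f)
    (hlip : ∀ a b, ‖gradient f a - gradient f b‖ ≤ L * ‖a - b‖)
    (hne_bot : ∀ u, h u ≠ ⊥) (hproper : ∃ u, h u ≠ ⊤)
    (ht0 : 0 < t) (ht1 : t ≤ 1 / L)
    (x xp : EuclideanSpace ℝ (Fin n))
    (hstep : ((⟪gradient f x, xp - x⟫ + 1 / (2 * t) * ‖xp - x‖ ^ 2 : ℝ) : EReal) + h xp ≤ h x) :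
    (f xp : EReal) + h xp ≤
      (f x : EReal) + h x - ((1 / (2 * t) - L / 2) * ‖xp - x‖ ^ 2 : ℝ) :=
  prox_grad_sufficient_decrease_general f h L t hf hlip x xp hstep
end

section
/- Let (a_k)_{k>=0} and (rho_k)_{k>=0} be sequences of nonnegative reals, phi_k real numbers bounded below by phi_*. Suppose for each k either (i) phi_k - phi_{k+1} >= c_1 a_{k+1}^2 with c_1 > 0, or (ii) phi_k - phi_{k+1} >= c_1 a_{k+1}^2 - c_2 rho_{k+1}^q where c_2 >= 0, q in (0,1), and moreover the indices k of type (ii) satisfy rho_{k+1} <= nu^{m(k)} rho_0 where m(k) is the number of type-(ii) indices up to k and nu in (0,1). Then the series sum_k a_k^2 converges, and hence a_k -> 0. -/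
/-!
Summing the descent inequalities telescopes, so `c₁ ∑ a_{k+1}²` is bounded by `φ₀ - φ_*` plus the
sum of the errors `c₂ ρ_{k+1}^q`. At a type-(ii) index `k` this error is at most
`c₂ ρ₀^q (ν^q)^{m(k)}`, and `m` takes each value at most once on type-(ii) indices, so the errors
are dominated by a geometric series.
-/

open Filter Finset Topology

theorem summable_ite_comp_count_succ {E : Type*} [NormedAddCommGroup E] [CompleteSpace E]
    {g : ℕ → E} (hg : Summable g) (N : ℕ → Prop) [DecidablePred N] :
    Summable (fun k => if N k then g (Nat.count N (k + 1)) else 0) := by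
  have hinj : Function.Injective (fun k : {k // N k} => Nat.count N (k + 1)) := by
    rintro ⟨x, hx⟩ ⟨y, hy⟩ hxy
    simp only [Nat.count_succ_eq_succ_count hx, Nat.count_succ_eq_succ_count hy,
      Nat.succ_inj] at hxy
    exact Subtype.ext (Nat.count_injective hx hy hxy)
  have := (summable_subtype_iff_indicator (s := {k | N k})
    (f := fun k => g (Nat.count N (k + 1)))).mp (hg.comp_injective hinj)
  convert this using 2 with k
  simp only [Set.indicator_apply, Set.mem_ofPred_eq]

theorem summable_of_descent_of_summable_error {φ b e : ℕ → ℝ} {c φstar : ℝ} (hc : 0 < c)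
    (hb : ∀ k, 0 ≤ b k) (he : Summable e) (he₀ : ∀ k, 0 ≤ e k) (hφ : ∀ k, φstar ≤ φ k)
    (hstep : ∀ k, c * b k ≤ φ k - φ (k + 1) + e k) :
    Summable b := by
  refine summable_of_sum_range_le hb (c := (φ 0 - φstar + ∑' k, e k) / c) fun n => ?_
  rw [le_div_iff₀' hc, mul_sum]
  calc ∑ k ∈ range n, c * b k
      ≤ ∑ k ∈ range n, (φ k - φ (k + 1) + e k) := sum_le_sum fun k _ => hstep k
    _ = φ 0 - φ n + ∑ k ∈ range n, e k := by rw [sum_add_distrib, sum_range_sub']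
    _ ≤ φ 0 - φstar + ∑' k, e k := by
        linarith [hφ n, he.sum_le_tsum (range n) fun k _ => he₀ k]

theorem tendsto_zero_of_summable_sq {a : ℕ → ℝ} (h : Summable fun k => a k ^ 2) :
    Tendsto a atTop (𝓝 0) := by
  have hsqrt : Tendsto (fun k => √(a k ^ 2)) atTop (𝓝 0) := by
    simpa using h.tendsto_atTop_zero.sqrt
  simp only [Real.sqrt_sq_eq_abs] at hsqrt
  exact (tendsto_zero_iff_abs_tendsto_zero a).mpr hsqrt

theorem rpow_le_of_le_pow_mul {r ν ρ₀ q : ℝ} {m : ℕ} (hr : 0 ≤ r) (hν : 0 ≤ ν) (hρ₀ : 0 ≤ ρ₀)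
    (hq : 0 ≤ q) (h : r ≤ ν ^ m * ρ₀) :
    r ^ q ≤ ρ₀ ^ q * (ν ^ q) ^ m := by
  calc r ^ q ≤ (ν ^ m * ρ₀) ^ q := Real.rpow_le_rpow hr h hq
    _ = ρ₀ ^ q * (ν ^ q) ^ m := by
        rw [Real.mul_rpow (by positivity) hρ₀, Real.rpow_pow_comm hν, mul_comm]

theorem descent_with_geometric_errors_summable_general
    (a ρ : ℕ → ℝ) (φ : ℕ → ℝ) (φstar : ℝ)
    (c₁ c₂ ν q ρ₀ : ℝ)
    (hc₁ : 0 < c₁) (hc₂ : 0 ≤ c₂) (hν : 0 < ν ∧ ν < 1) (hq : 0 < q ∧ q < 1)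
    (hρ₀ : 0 < ρ₀)
    (hρ : ∀ k, 0 ≤ ρ k)
    (hφ : ∀ k, φstar ≤ φ k)
    (N : ℕ → Prop) [DecidablePred N]
    (hstep : ∀ k, ¬ N k → φ k - φ (k + 1) ≥ c₁ * a (k + 1) ^ 2)
    (hstepN : ∀ k, N k → φ k - φ (k + 1) ≥ c₁ * a (k + 1) ^ 2 - c₂ * ρ (k + 1) ^ q)
    (hρN : ∀ k, N k →
      ρ (k + 1) ≤ ν ^ (((Finset.range (k + 1)).filter N).card) * ρ₀) :
    Summable (fun k => a k ^ 2) ∧ Tendsto a atTop (nhds 0) := by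
  obtain ⟨hν₀, hν₁⟩ := hν
  obtain ⟨hq₀, -⟩ := hq
  simp only [← Nat.count_eq_card_filter_range] at hρN
  have hgeom : Summable fun j : ℕ => c₂ * ρ₀ ^ q * (ν ^ q) ^ j :=
    (summable_geometric_of_lt_one (by positivity) (Real.rpow_lt_one hν₀.le hν₁ hq₀)).mul_left _
  set e : ℕ → ℝ := fun k => if N k then c₂ * ρ (k + 1) ^ q else 0
  have he_le : ∀ k, e k ≤ if N k then c₂ * ρ₀ ^ q * (ν ^ q) ^ Nat.count N (k + 1) else 0 := by
    intro k
    by_cases hk : N k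
    · simpa only [e, hk, if_true, mul_assoc] using mul_le_mul_of_nonneg_left
        (rpow_le_of_le_pow_mul (hρ _) hν₀.le hρ₀.le hq₀.le (hρN k hk)) hc₂
    · simp only [e, hk, if_false, le_refl]
  have he₀ : ∀ k, 0 ≤ e k := fun k => by
    by_cases hk : N k
    · simpa only [e, hk, if_true] using mul_nonneg hc₂ (Real.rpow_nonneg (hρ _) q)
    · simp only [e, hk, if_false, le_refl]
  have he : Summable e :=
    .of_nonneg_of_le he₀ he_le (summable_ite_comp_count_succ hgeom N)
  have hdescent : ∀ k, c₁ * a (k + 1) ^ 2 ≤ φ k - φ (k + 1) + e k := fun k => by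
    by_cases hk : N k
    · simp only [e, hk, if_true]; linarith [hstepN k hk]
    · simp only [e, hk, if_false]; linarith [hstep k hk]
  have hsum : Summable fun k => a k ^ 2 := (summable_nat_add_iff 1).mp
    (summable_of_descent_of_summable_error hc₁ (fun k => sq_nonneg _) he he₀ hφ hdescent)
  exact ⟨hsum, tendsto_zero_of_summable_sq hsum⟩

/-- Abstract global convergence argument: telescoping descent inequalities with
geometrically summable extra increase terms yields a summable residual series. -/
theorem descent_with_geometric_errors_summable
    (a ρ : ℕ → ℝ) (φ : ℕ → ℝ) (φstar : ℝ)
    (c₁ c₂ ν q ρ₀ : ℝ)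
    (hc₁ : 0 < c₁) (hc₂ : 0 ≤ c₂) (hν : 0 < ν ∧ ν < 1) (hq : 0 < q ∧ q < 1)
    (hρ₀ : 0 < ρ₀)
    (ha : ∀ k, 0 ≤ a k) (hρ : ∀ k, 0 ≤ ρ k)
    (hφ : ∀ k, φstar ≤ φ k)
    (N : ℕ → Prop) [DecidablePred N]
    (hstep : ∀ k, ¬ N k → φ k - φ (k + 1) ≥ c₁ * a (k + 1) ^ 2)
    (hstepN : ∀ k, N k → φ k - φ (k + 1) ≥ c₁ * a (k + 1) ^ 2 - c₂ * ρ (k + 1) ^ q)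
    (hρN : ∀ k, N k →
      ρ (k + 1) ≤ ν ^ (((Finset.range (k + 1)).filter N).card) * ρ₀) :
    Summable (fun k => a k ^ 2) ∧ Tendsto a atTop (nhds 0) :=
  descent_with_geometric_errors_summable_general a ρ φ φstar c₁ c₂ ν q ρ₀ hc₁ hc₂ hν hq hρ₀ hρ hφ N
    hstep hstepN hρN
end

section
/- For x in R^n with x^+ := max(x, 0) componentwise nonzero (||x^+|| > 0), the map P(x) = x^+ / ||x^+||_2 projects x onto the nonnegative part of the unit sphere: for every y in R^n with ||y||_2 = 1 and y >= 0 componentwise, ||x - P(x)||_2 <= ||x - y||_2. -/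
/-- The componentwise positive part of a vector. -/
noncomputable def posPart {n : ℕ} (x : EuclideanSpace ℝ (Fin n)) :
    EuclideanSpace ℝ (Fin n) :=
  WithLp.toLp 2 (fun i => max (x i) 0)

/-!
On the unit sphere `‖x - u‖² = ‖x‖² - 2⟪x, u⟫ + 1`, so a nearest point to `x` is one maximising
`⟪x, u⟫`. For `y ≥ 0` we have `⟪x, y⟫ ≤ ⟪x⁺, y⟫ ≤ ‖x⁺‖` by Cauchy–Schwarz, and `x⁺ / ‖x⁺‖`
attains this bound since `⟪x, x⁺⟫ = ‖x⁺‖²`.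
-/

open RealInnerProductSpace

theorem norm_sub_le_norm_sub_of_inner_le {E : Type*} [NormedAddCommGroup E]
    [InnerProductSpace ℝ E] {x u v : E} (hu : ‖u‖ = 1) (hv : ‖v‖ = 1) (h : ⟪x, v⟫ ≤ ⟪x, u⟫) :
    ‖x - u‖ ≤ ‖x - v‖ := by
  refine (sq_le_sq₀ (norm_nonneg _) (norm_nonneg _)).1 ?_
  rw [norm_sub_sq_real, norm_sub_sq_real, hu, hv]
  linarith

theorem inner_posPart_self {n : ℕ} (x : EuclideanSpace ℝ (Fin n)) :
    ⟪x, posPart x⟫ = ‖posPart x‖ ^ 2 := by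
  rw [← real_inner_self_eq_norm_sq, PiLp.inner_apply, PiLp.inner_apply]
  refine Finset.sum_congr rfl fun i _ => ?_
  simp only [_root_.posPart, PiLp.toLp_apply, RCLike.inner_apply, conj_trivial]
  rcases le_or_gt (x i) 0 with hneg | hpos
  · simp [hneg]
  · rw [max_eq_left hpos.le]

theorem inner_le_inner_posPart_of_nonneg {n : ℕ} (x : EuclideanSpace ℝ (Fin n))
    {y : EuclideanSpace ℝ (Fin n)} (hy : ∀ i, 0 ≤ y i) : ⟪x, y⟫ ≤ ⟪posPart x, y⟫ := by
  rw [PiLp.inner_apply, PiLp.inner_apply]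
  refine Finset.sum_le_sum fun i _ => ?_
  simp only [_root_.posPart, PiLp.toLp_apply, RCLike.inner_apply', conj_trivial]
  exact mul_le_mul_of_nonneg_right (le_max_left _ _) (hy i)

/-- `x⁺/‖x⁺‖` is a nearest point to `x` on the nonnegative part of the unit sphere. -/
theorem posPart_normalized_is_projection {n : ℕ}
    (x : EuclideanSpace ℝ (Fin n)) (hx : 0 < ‖posPart x‖)
    (y : EuclideanSpace ℝ (Fin n)) (hy1 : ‖y‖ = 1) (hy2 : ∀ i, 0 ≤ y i) :
    ‖x - ‖posPart x‖⁻¹ • posPart x‖ ≤ ‖x - y‖ := by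
  refine norm_sub_le_norm_sub_of_inner_le (norm_smul_inv_norm (norm_pos_iff.1 hx)) hy1 ?_
  calc ⟪x, y⟫ ≤ ⟪posPart x, y⟫ := inner_le_inner_posPart_of_nonneg x hy2
    _ ≤ ‖posPart x‖ * ‖y‖ := real_inner_le_norm _ _
    _ = ‖posPart x‖⁻¹ * ‖posPart x‖ ^ 2 := by rw [hy1]; field_simp
    _ = ⟪x, ‖posPart x‖⁻¹ • posPart x⟫ := by rw [real_inner_smul_right, inner_posPart_self]
end
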